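/- Let (F,Ω,⋆) be a stratified fusion system on a group S, let Γ be an F-closed set of subgroups of S such that F is Γ-inductive, and let X ∈ Γ. Suppose that X⋆ is fully normalized in (F,Ω,⋆). Then there exists an N_F(X⋆)-conjugate X′ of X (i.e. the image of X under an N_F(X⋆)-isomorphism) such that X′ is fully normalized in (F,Ω,⋆). Moreover, for any such X′ one has X⋆ = (X′)⋆, and X′ is fully normalized in N_F(X⋆). -/

import Mathlib

/-- `F f X Y` asserts that the function `f : S → S` (through its restriction to `X`)
is an `F`-homomorphism from the subgroup `X` to the subgroup `Y`. -/
abbrev HomPred (S : Type*) [Group S] := (S → S) → Subgroup S → Subgroup S → Prop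

/-- A fusion system, with hom-sets given by `F · X Y`, on the subgroup `T`
of the ambient group `S`.  Morphisms are represented by functions `S → S`,
two functions agreeing on `X` representing the same morphism `X → Y`. -/
structure IsFusionSystem {S : Type*} [Group S] (T : Subgroup S) (F : HomPred S) : Prop where
  le_base : ∀ f X Y, F f X Y → X ≤ T ∧ Y ≤ T
  mapsTo : ∀ f X Y, F f X Y → Set.MapsTo f (X : Set S) (Y : Set S)
  injOn : ∀ f X Y, F f X Y → Set.InjOn f (X : Set S)
  map_mul' : ∀ f X Y, F f X Y → ∀ x ∈ X, ∀ y ∈ X, f (x * y) = f x * f y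
  of_eqOn : ∀ f g X Y, F f X Y → Set.EqOn g f (X : Set S) → F g X Y
  conj_mem : ∀ g ∈ T, ∀ X Y : Subgroup S, X ≤ T → Y ≤ T →
    (∀ x ∈ X, g⁻¹ * x * g ∈ Y) → F (fun x => g⁻¹ * x * g) X Y
  comp_mem : ∀ f g X Y Z, F f X Y → F g Y Z → F (g ∘ f) X Z
  restrict_mem : ∀ f X Y X₀ Y₀, F f X Y → X₀ ≤ X → Y₀ ≤ Y →
    Set.MapsTo f (X₀ : Set S) (Y₀ : Set S) → F f X₀ Y₀
  corestrict_mem : ∀ f X Y, F f X Y → F f X (Subgroup.closure (f '' (X : Set S)))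
  inv_mem : ∀ f X Y, F f X Y →
    ∃ g, F g (Subgroup.closure (f '' (X : Set S))) X ∧ ∀ x ∈ X, g (f x) = x

variable {S : Type*} [Group S]

/-- `f` is an `F`-isomorphism from `X` onto `Y`. -/
def IsFIso (F : HomPred S) (f : S → S) (X Y : Subgroup S) : Prop :=
  F f X Y ∧ f '' (X : Set S) = (Y : Set S)

/-- `X^F`, the set of `F`-conjugates of `X`. -/
def FConj (F : HomPred S) (X : Subgroup S) : Set (Subgroup S) :=
  {Y | ∃ f, IsFIso F f X Y}

/-- `N` is normal in the fusion system `F` on the base subgroup `T`: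
`N` is normal in `T` and every `F`-isomorphism `X → Y` extends to an
`F`-isomorphism `XN → YN` mapping `N` onto `N`. -/
def NormalInF (T : Subgroup S) (F : HomPred S) (N : Subgroup S) : Prop :=
  N ≤ T ∧ (∀ g ∈ T, ∀ n ∈ N, g⁻¹ * n * g ∈ N) ∧
    ∀ f X Y, IsFIso F f X Y →
      ∃ g, IsFIso F g (X ⊔ N) (Y ⊔ N) ∧ Set.EqOn g f (X : Set S) ∧
        g '' (N : Set S) = (N : Set S)

/-- The supremum of the lengths of strictly increasing chains in `Ω`
terminating in `A`. -/
noncomputable def dimEnd (Ω : Set (Subgroup S)) (A : Subgroup S) : ℕ :=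
  sSup {n | ∃ c : Fin (n + 1) → Subgroup S,
    StrictMono c ∧ (∀ i, c i ∈ Ω) ∧ c (Fin.last n) = A}

/-- The supremum of the lengths of strictly increasing chains in `Ω`. -/
noncomputable def dimOmega (Ω : Set (Subgroup S)) : ℕ :=
  sSup {n | ∃ c : Fin (n + 1) → Subgroup S, StrictMono c ∧ ∀ i, c i ∈ Ω}

/-- `(Ω, star)` is a stratification on the fusion system `F` on base `T`. -/
structure IsStratification (T : Subgroup S) (F : HomPred S)
    (Ω : Set (Subgroup S)) (star : Subgroup S → Subgroup S) : Prop where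
  omega_le : ∀ A ∈ Ω, A ≤ T
  star_mem : ∀ X : Subgroup S, X ≤ T → star X ∈ Ω
  star_fix : ∀ A ∈ Ω, star A = A
  star_mono : ∀ X Y : Subgroup S, X ≤ T → Y ≤ T → X ≤ Y → star X ≤ star Y
  finDim : ∃ N : ℕ, ∀ n : ℕ,
    (∃ c : Fin (n + 1) → Subgroup S, StrictMono c ∧ ∀ i, c i ∈ Ω) → n ≤ N
  conj_invariant : ∀ A ∈ Ω, ∀ f Y, IsFIso F f A Y → Y ∈ Ω
  le_star : ∀ X : Subgroup S, X ≤ T → X ≤ star X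
  extend_star : ∀ f X Y, IsFIso F f X Y →
    ∃ g, IsFIso F g (star X) (star Y) ∧ Set.EqOn g f (X : Set S)

/-- `dim_Ω(X)`, the supremum of the lengths of strictly increasing chains
in `Ω` terminating in `X⋆`. -/
noncomputable def dimStar (Ω : Set (Subgroup S)) (star : Subgroup S → Subgroup S)
    (X : Subgroup S) : ℕ :=
  dimEnd Ω (star X)

/-- `V` is fully normalized in the stratified fusion system `(F, Ω, star)` on base `T`. -/
def FullyNormalizedIn (T : Subgroup S) (F : HomPred S) (Ω : Set (Subgroup S))
    (star : Subgroup S → Subgroup S) (V : Subgroup S) : Prop :=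
  ∀ U ∈ FConj F V, dimStar Ω star (Subgroup.normalizer (U : Set S) ⊓ T) ≤ dimStar Ω star (Subgroup.normalizer (V : Set S) ⊓ T)

/-- `V` is fully centralized in the stratified fusion system `(F, Ω, star)` on base `T`. -/
def FullyCentralizedIn (T : Subgroup S) (F : HomPred S) (Ω : Set (Subgroup S))
    (star : Subgroup S → Subgroup S) (V : Subgroup S) : Prop :=
  ∀ U ∈ FConj F V,
    dimStar Ω star ((Subgroup.centralizer (U : Set S) ⊓ T) ⊔ U) ≤
      dimStar Ω star ((Subgroup.centralizer (V : Set S) ⊓ T) ⊔ V)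

/-- `Γ` is an `F`-closed set of subgroups. -/
def FClosed (F : HomPred S) (Γ : Set (Subgroup S)) : Prop :=
  Γ.Nonempty ∧ (∀ X ∈ Γ, ∀ Y ∈ FConj F X, Y ∈ Γ) ∧
    ∀ X ∈ Γ, ∀ Y : Subgroup S, X ≤ Y → Y ∈ Γ

/-- `Y` is normalizer-inductive in the fusion system `F` on base `T`. -/
def NormalizerInductive (T : Subgroup S) (F : HomPred S) (Y : Subgroup S) : Prop :=
  ∀ X ∈ FConj F Y, ∃ φ, F φ (Subgroup.normalizer (X : Set S) ⊓ T) (Subgroup.normalizer (Y : Set S) ⊓ T) ∧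
    φ '' (X : Set S) = (Y : Set S)

/-- `Y` is centralizer-inductive in the fusion system `F` on base `T`. -/
def CentralizerInductive (T : Subgroup S) (F : HomPred S) (Y : Subgroup S) : Prop :=
  ∀ X ∈ FConj F Y, ∃ ψ,
    F ψ ((Subgroup.centralizer (X : Set S) ⊓ T) ⊔ X)
        ((Subgroup.centralizer (Y : Set S) ⊓ T) ⊔ Y) ∧
    ψ '' (X : Set S) = (Y : Set S)

/-- `F` is `Γ`-inductive. -/
def GammaInductive (T : Subgroup S) (F : HomPred S) (Γ : Set (Subgroup S)) : Prop :=
  ∀ X ∈ Γ, ∃ Y ∈ FConj F X, NormalizerInductive T F Y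

/-- `F` is inductive (i.e. `Sub(T)`-inductive). -/
def InductiveFS (T : Subgroup S) (F : HomPred S) : Prop :=
  ∀ X : Subgroup S, X ≤ T → ∃ Y ∈ FConj F X, NormalizerInductive T F Y

/-- `⟨Φ⟩_T`: the smallest fusion system on `T` all of whose homomorphisms are
`Famb`-homomorphisms and whose hom-sets contain `Φ`. -/
def GenFS (T : Subgroup S) (Famb : HomPred S) (Φ : HomPred S) : HomPred S :=
  fun f X Y => ∀ E : HomPred S, IsFusionSystem T E →
    (∀ g A B, E g A B → Famb g A B) → (∀ g A B, Φ g A B → E g A B) → E f X Y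

/-- The generating set `Φ` for `N_F(V)`: `F`-isomorphisms between subgroups of
`N_S(V)` extending to `F`-isomorphisms `XV → YV` restricting to an automorphism of `V`. -/
def NPhi (F : HomPred S) (V : Subgroup S) : HomPred S :=
  fun f X Y => X ≤ Subgroup.normalizer (V : Set S) ∧ Y ≤ Subgroup.normalizer (V : Set S) ∧ IsFIso F f X Y ∧
    ∃ g, IsFIso F g (X ⊔ V) (Y ⊔ V) ∧ Set.EqOn g f (X : Set S) ∧
      g '' (V : Set S) = (V : Set S)

/-- The fusion system `N_F(V)` on `N_S(V)`. -/
def NFus (F : HomPred S) (V : Subgroup S) : HomPred S :=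
  GenFS (Subgroup.normalizer (V : Set S)) F (NPhi F V)

/-- The generating set `Ψ` for `C_F(V)`: `F`-isomorphisms between subgroups of
`C_S(V)` extending to `F`-isomorphisms `XV → YV` restricting to the identity on `V`. -/
def CPsi (F : HomPred S) (V : Subgroup S) : HomPred S :=
  fun f X Y => X ≤ Subgroup.centralizer (V : Set S) ∧
    Y ≤ Subgroup.centralizer (V : Set S) ∧ IsFIso F f X Y ∧
    ∃ g, IsFIso F g (X ⊔ V) (Y ⊔ V) ∧ Set.EqOn g f (X : Set S) ∧ ∀ v ∈ V, g v = v

/-- The fusion system `C_F(V)` on `C_S(V)`. -/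
def CFus (F : HomPred S) (V : Subgroup S) : HomPred S :=
  GenFS (Subgroup.centralizer (V : Set S)) F (CPsi F V)

/-- `X ↦ X• = (VX)⋆ ⊓ N_S(V)`. -/
def bulletStar (star : Subgroup S → Subgroup S) (V : Subgroup S) :
    Subgroup S → Subgroup S :=
  fun X => star (V ⊔ X) ⊓ Subgroup.normalizer (V : Set S)

/-- `N_Ω(V) = {X• : X ≤ N_S(V)}`. -/
def bulletOmega (star : Subgroup S → Subgroup S) (V : Subgroup S) : Set (Subgroup S) :=
  {A | ∃ X : Subgroup S, X ≤ Subgroup.normalizer (V : Set S) ∧ A = bulletStar star V X}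

/-- `A ↦ A° = (VA)⋆ ⊓ C_S(V)`. -/
def circStar (star : Subgroup S → Subgroup S) (V : Subgroup S) :
    Subgroup S → Subgroup S :=
  fun A => star (V ⊔ A) ⊓ Subgroup.centralizer (V : Set S)

/-- `C_Ω(V) = {A° : A ≤ C_S(V)}`. -/
def circOmega (star : Subgroup S → Subgroup S) (V : Subgroup S) : Set (Subgroup S) :=
  {A | ∃ X : Subgroup S, X ≤ Subgroup.centralizer (V : Set S) ∧ A = circStar star V X}

/-- `T` is strongly closed in `F`. -/
def StronglyClosedF (F : HomPred S) (T : Subgroup S) : Prop :=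
  ∀ X : Subgroup S, X ≤ T → ∀ Y ∈ FConj F X, Y ≤ T

/-!
Since `X⋆` is fully normalized and has a normalizer-inductive `F`-conjugate, it is itself
normalizer-inductive. For a normalizer-inductive `Y ∈ X^F`, extending `X → Y` to `X⋆ → Y⋆` and
composing with an embedding `N_S(Y⋆) → N_S(X⋆)` maps `X` onto some `X' ≤ X⋆` by an
`N_F(X⋆)`-isomorphism and `N_S(Y)` into `N_S(X')`, so `X'` is fully normalized.

Conversely, `N_F(X⋆)`-morphisms send elements into `X⋆` exactly when they lie in `X⋆`, so every
`N_F(X⋆)`-conjugate `X'` of `X` lies in `X⋆` and, having the same `dim_Ω`, satisfies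
`(X')⋆ = X⋆`. If `X'` is fully normalized it is normalizer-inductive, and the extensions to `⋆`s
of its normalizer embeddings fix `X⋆`; such isomorphisms transport chains of `N_Ω(X⋆)`.
-/

open Subgroup

def MulOn (f : S → S) (A : Subgroup S) : Prop :=
  ∀ x ∈ A, ∀ y ∈ A, f (x * y) = f x * f y

namespace MulOn

variable {f : S → S} {A B D : Subgroup S}

lemma map_one (h : MulOn f A) : f 1 = 1 := by
  simpa using h 1 A.one_mem 1 A.one_mem

lemma map_inv (h : MulOn f A) {x : S} (hx : x ∈ A) : f x⁻¹ = (f x)⁻¹ :=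
  eq_inv_of_mul_eq_one_left (by rw [← h _ (A.inv_mem hx) _ hx, inv_mul_cancel, h.map_one])

lemma map_conj (h : MulOn f A) {x n : S} (hx : x ∈ A) (hn : n ∈ A) :
    f (n⁻¹ * x * n) = (f n)⁻¹ * f x * f n := by
  rw [h _ (A.mul_mem (A.inv_mem hn) hx) _ hn, h _ (A.inv_mem hn) _ hx, h.map_inv hn]

lemma coe_closure_image (h : MulOn f A) : (Subgroup.closure (f '' A) : Set S) = f '' A :=
  let K : Subgroup S :=
    { carrier := f '' A
      one_mem' := ⟨1, A.one_mem, h.map_one⟩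
      mul_mem' := by
        rintro _ _ ⟨x, hx, rfl⟩ ⟨y, hy, rfl⟩
        exact ⟨x * y, A.mul_mem hx hy, h x hx y hy⟩
      inv_mem' := by
        rintro _ ⟨x, hx, rfl⟩
        exact ⟨x⁻¹, A.inv_mem hx, h.map_inv hx⟩ }
  congrArg SetLike.coe (Subgroup.closure_eq K)

lemma closure_image_sup (h : MulOn f D) (hA : A ≤ D) (hB : B ≤ D) :
    Subgroup.closure (f '' (A ⊔ B : Subgroup S)) =
      Subgroup.closure (f '' A) ⊔ Subgroup.closure (f '' B) := by
  refine le_antisymm ((Subgroup.closure_le _).2 ?_)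
    (sup_le (Subgroup.closure_mono (Set.image_mono (SetLike.coe_subset_coe.2 le_sup_left)))
      (Subgroup.closure_mono (Set.image_mono (SetLike.coe_subset_coe.2 le_sup_right))))
  rintro _ ⟨z, hz, rfl⟩
  rw [SetLike.mem_coe, ← A.closure_eq, ← B.closure_eq, ← Subgroup.closure_union] at hz
  have hD : Subgroup.closure ((A : Set S) ∪ B) ≤ D := by
    rw [Subgroup.closure_union, A.closure_eq, B.closure_eq]; exact sup_le hA hB
  induction hz using Subgroup.closure_induction with
  | mem x hx =>
    rcases hx with hx | hx
    · exact mem_sup_left (Subgroup.subset_closure ⟨x, hx, rfl⟩)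
    · exact mem_sup_right (Subgroup.subset_closure ⟨x, hx, rfl⟩)
  | one => rw [h.map_one]; exact one_mem _
  | mul x y hx hy ihx ihy => rw [h x (hD hx) y (hD hy)]; exact mul_mem ihx ihy
  | inv x hx ihx => rw [h.map_inv (hD hx)]; exact inv_mem ihx

lemma image_mem_normalizer (h : MulOn f D) {U : Subgroup S} (hUD : U ≤ D) {n : S}
    (hnD : n ∈ D) (hn : n ∈ normalizer (U : Set S)) :
    f n ∈ normalizer (f '' U) := by
  rw [mem_set_normalizer_iff'']
  intro y
  constructor
  · rintro ⟨u, hu, rfl⟩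
    exact ⟨n⁻¹ * u * n, (mem_set_normalizer_iff''.1 hn u).1 hu, h.map_conj (hUD hu) hnD⟩
  · rintro ⟨u, hu, hy⟩
    have hu' : n⁻¹⁻¹ * u * n⁻¹ ∈ U :=
      (mem_set_normalizer_iff''.1 (inv_mem hn) u).1 hu
    refine ⟨_, hu', ?_⟩
    rw [h.map_conj (hUD hu) (D.inv_mem hnD), h.map_inv hnD, hy]
    group

end MulOn

lemma IsFIso.closure_image_eq {F : HomPred S} {f : S → S} {A B : Subgroup S}
    (h : IsFIso F f A B) : Subgroup.closure (f '' A) = B := by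
  rw [h.2, Subgroup.closure_eq]

namespace IsFusionSystem

variable {F : HomPred S} (hF : IsFusionSystem ⊤ F) {f g : S → S} {A B C : Subgroup S}
include hF

lemma mulOn (hf : F f A B) : MulOn f A := hF.map_mul' f A B hf

lemma coe_closure_image (hf : F f A B) : (Subgroup.closure (f '' A) : Set S) = f '' A :=
  (hF.mulOn hf).coe_closure_image

lemma restrict (hf : F f A B) (hCA : C ≤ A) : F f C B :=
  hF.restrict_mem f A B C B hf hCA le_rfl fun _ hx => hF.mapsTo f A B hf (hCA hx)

lemma mono_right (hf : F f A B) (hBC : B ≤ C) : F f A C :=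
  hF.of_eqOn _ f A C
    (hF.comp_mem f _ A B C hf
      (hF.conj_mem 1 (mem_top 1) B C le_top le_top fun x hx => by simpa using hBC hx))
    fun x _ => by simp

lemma isFIso_closure_image (hf : F f A B) : IsFIso F f A (Subgroup.closure (f '' A)) :=
  ⟨hF.corestrict_mem f A B hf, (hF.coe_closure_image hf).symm⟩

lemma isFIso_comp (hf : IsFIso F f A B) (hg : IsFIso F g B C) : IsFIso F (g ∘ f) A C :=
  ⟨hF.comp_mem f g A B C hf.1 hg.1, by rw [Set.image_comp, hf.2, hg.2]⟩

lemma exists_isFIso_inv (hf : IsFIso F f A B) :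
    ∃ g, IsFIso F g B A ∧ ∀ x ∈ A, g (f x) = x := by
  obtain ⟨g, hg, hgf⟩ := hF.inv_mem f A B hf.1
  rw [hf.closure_image_eq] at hg
  refine ⟨g, ⟨hg, subset_antisymm (hF.mapsTo g B A hg).image_subset fun x hx => ?_⟩, hgf⟩
  exact ⟨f x, hf.2 ▸ Set.mem_image_of_mem f hx, hgf x hx⟩

lemma mem_fConj_symm (h : B ∈ FConj F A) : A ∈ FConj F B := by
  obtain ⟨f, hf⟩ := h
  obtain ⟨g, hg, -⟩ := hF.exists_isFIso_inv hf
  exact ⟨g, hg⟩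

lemma mem_fConj_trans (hAB : B ∈ FConj F A) (hBC : C ∈ FConj F B) : C ∈ FConj F A := by
  obtain ⟨f, hf⟩ := hAB
  obtain ⟨g, hg⟩ := hBC
  exact ⟨g ∘ f, hF.isFIso_comp hf hg⟩

lemma strictMonoOn_closure_image (hf : F f A B) :
    StrictMonoOn (fun C : Subgroup S => Subgroup.closure (f '' C)) (Set.Iic A) := by
  intro C₁ h₁ C₂ h₂ h
  simp only [← SetLike.coe_ssubset_coe, hF.coe_closure_image (hF.restrict hf h₁),
    hF.coe_closure_image (hF.restrict hf h₂)]
  exact ((hF.injOn f A B hf).image_ssubset_image_iff (SetLike.coe_subset_coe.2 h₁)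
    (SetLike.coe_subset_coe.2 h₂)).2 (SetLike.coe_ssubset_coe.2 h)

lemma closure_image_inf_normalizer {V P Q : Subgroup S} (hf : IsFIso F f P Q) (hVP : V ≤ P)
    (hfV : f '' V = V) (hCP : C ≤ P) :
    Subgroup.closure (f '' (C ⊓ normalizer (V : Set S) : Subgroup S)) =
      Subgroup.closure (f '' C) ⊓ normalizer (V : Set S) := by
  refine SetLike.ext' ?_
  rw [hF.coe_closure_image (hF.restrict hf.1 (inf_le_left.trans hCP)), coe_inf,
    coe_inf, hF.coe_closure_image (hF.restrict hf.1 hCP)]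
  ext y
  constructor
  · rintro ⟨c, ⟨hcC, hcN⟩, rfl⟩
    refine ⟨⟨c, hcC, rfl⟩, ?_⟩
    simpa only [hfV, SetLike.mem_coe] using
      (hF.mulOn hf.1).image_mem_normalizer hVP (hCP hcC) hcN
  · rintro ⟨⟨c, hcC, rfl⟩, hN⟩
    obtain ⟨g, hg, hgf⟩ := hF.exists_isFIso_inv hf
    have hgV : g '' V = V := by
      calc g '' V = g '' (f '' V) := by rw [hfV]
        _ = V := by
          rw [Set.image_image, Set.image_congr fun v hv => hgf v (hVP hv), Set.image_id']
    have hVQ : V ≤ Q := by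
      rw [← SetLike.coe_subset_coe, ← hf.2, ← hfV]
      exact Set.image_mono (SetLike.coe_subset_coe.2 hVP)
    have hc := (hF.mulOn hg.1).image_mem_normalizer hVQ (hF.mapsTo f P Q hf.1 (hCP hcC)) hN
    rw [hgV, hgf c (hCP hcC)] at hc
    exact ⟨c, ⟨hcC, hc⟩, rfl⟩

end IsFusionSystem

def HasBoundedChains (Ω' : Set (Subgroup S)) : Prop :=
  ∃ N : ℕ, ∀ n : ℕ, (∃ c : Fin (n + 1) → Subgroup S, StrictMono c ∧ ∀ i, c i ∈ Ω') → n ≤ N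

namespace HasBoundedChains

variable {Ω₁ Ω₂ : Set (Subgroup S)} {A B : Subgroup S}

lemma le_dimEnd (h : HasBoundedChains Ω₁) {n : ℕ} {c : Fin (n + 1) → Subgroup S}
    (hc : StrictMono c) (hcΩ : ∀ i, c i ∈ Ω₁) : n ≤ dimEnd Ω₁ (c (Fin.last n)) := by
  obtain ⟨N, hN⟩ := h
  exact le_csSup ⟨N, fun m ⟨c, hc, hcΩ, _⟩ => hN m ⟨c, hc, hcΩ⟩⟩ ⟨c, hc, hcΩ, rfl⟩

lemma exists_chain_dimEnd (h : HasBoundedChains Ω₁) (hA : A ∈ Ω₁) :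
    ∃ c : Fin (dimEnd Ω₁ A + 1) → Subgroup S,
      StrictMono c ∧ (∀ i, c i ∈ Ω₁) ∧ c (Fin.last _) = A := by
  obtain ⟨N, hN⟩ := h
  exact Nat.sSup_mem (s := {n | ∃ c : Fin (n + 1) → Subgroup S,
      StrictMono c ∧ (∀ i, c i ∈ Ω₁) ∧ c (Fin.last n) = A})
    ⟨0, fun _ => A, fun i j h => absurd h (by omega), fun _ => hA, rfl⟩
    ⟨N, fun m ⟨c, hc, hcΩ, _⟩ => hN m ⟨c, hc, hcΩ⟩⟩

lemma of_strictMonoOn (h : HasBoundedChains Ω₂) {e : Subgroup S → Subgroup S}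
    (he : StrictMonoOn e Ω₁) (hmaps : Set.MapsTo e Ω₁ Ω₂) : HasBoundedChains Ω₁ := by
  obtain ⟨N, hN⟩ := h
  exact ⟨N, fun n ⟨c, hc, hcΩ⟩ =>
    hN n ⟨e ∘ c, fun i j hij => he (hcΩ i) (hcΩ j) (hc hij), fun i => hmaps (hcΩ i)⟩⟩

lemma dimEnd_le_dimEnd_of_strictMonoOn (h : HasBoundedChains Ω₂) {e : Subgroup S → Subgroup S}
    (he : StrictMonoOn e {C | C ∈ Ω₁ ∧ C ≤ A}) (hmaps : ∀ C ∈ Ω₁, C ≤ A → e C ∈ Ω₂) :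
    dimEnd Ω₁ A ≤ dimEnd Ω₂ (e A) := by
  refine csSup_le' ?_
  rintro n ⟨c, hc, hcΩ, rfl⟩
  have hle : ∀ i, c i ∈ {C | C ∈ Ω₁ ∧ C ≤ c (Fin.last n)} :=
    fun i => ⟨hcΩ i, hc.monotone (Fin.le_last i)⟩
  exact h.le_dimEnd (c := e ∘ c) (fun i j hij => he (hle i) (hle j) (hc hij))
    fun i => hmaps _ (hle i).1 (hle i).2

lemma dimEnd_lt_dimEnd (h : HasBoundedChains Ω₁) (hA : A ∈ Ω₁) (hB : B ∈ Ω₁) (hAB : A < B) :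
    dimEnd Ω₁ A < dimEnd Ω₁ B := by
  obtain ⟨c, hc, hcΩ, hlast⟩ := h.exists_chain_dimEnd hA
  have hmem : ∀ i, Fin.insertNth (α := fun _ => Subgroup S) (Fin.last _) B c i ∈ Ω₁ := by
    intro i
    obtain ⟨i, rfl⟩ | rfl := i.eq_castSucc_or_eq_last <;>
      simp [Fin.insertNth_last', hcΩ, hB]
  simpa [Fin.insertNth_last'] using
    h.le_dimEnd (Fin.strictMono_insertNth_last hc B (by rwa [hlast])) hmem

lemma dimEnd_mono (h : HasBoundedChains Ω₁) (hA : A ∈ Ω₁) (hB : B ∈ Ω₁) (hAB : A ≤ B) :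
    dimEnd Ω₁ A ≤ dimEnd Ω₁ B := by
  rcases hAB.eq_or_lt with rfl | hlt
  · exact le_rfl
  · exact (h.dimEnd_lt_dimEnd hA hB hlt).le

lemma eq_of_le_of_dimEnd_le (h : HasBoundedChains Ω₁) (hA : A ∈ Ω₁) (hB : B ∈ Ω₁)
    (hAB : A ≤ B) (hd : dimEnd Ω₁ B ≤ dimEnd Ω₁ A) : A = B :=
  hAB.eq_or_lt.resolve_right fun hlt => (h.dimEnd_lt_dimEnd hA hB hlt).not_ge hd

end HasBoundedChains

namespace IsStratification

variable {F : HomPred S} {Ω : Set (Subgroup S)} {star : Subgroup S → Subgroup S}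
  (hΩ : IsStratification ⊤ F Ω star) {f : S → S} {A B D P Q : Subgroup S}
include hΩ

lemma hasBoundedChains : HasBoundedChains Ω := hΩ.finDim

lemma star_mem' (A : Subgroup S) : star A ∈ Ω := hΩ.star_mem A le_top

lemma le_star' (A : Subgroup S) : A ≤ star A := hΩ.le_star A le_top

lemma star_le_star (h : A ≤ B) : star A ≤ star B := hΩ.star_mono A B le_top le_top h

lemma star_le_of_le (h : A ≤ B) (hB : B ∈ Ω) : star A ≤ B :=
  hΩ.star_fix B hB ▸ hΩ.star_le_star h

lemma star_star (A : Subgroup S) : star (star A) = star A :=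
  hΩ.star_fix _ (hΩ.star_mem' A)

lemma star_sup_eq {V : Subgroup S} (h : V ≤ star A) : star (V ⊔ A) = star A :=
  le_antisymm (hΩ.star_le_of_le (sup_le h (hΩ.le_star' A)) (hΩ.star_mem' A))
    (hΩ.star_le_star le_sup_right)

lemma dimStar_mono (h : A ≤ B) : dimStar Ω star A ≤ dimStar Ω star B :=
  hΩ.hasBoundedChains.dimEnd_mono (hΩ.star_mem' A) (hΩ.star_mem' B) (hΩ.star_le_star h)

lemma star_eq_of_star_le (h : star A ≤ star B) (hd : dimStar Ω star B ≤ dimStar Ω star A) :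
    star A = star B :=
  hΩ.hasBoundedChains.eq_of_le_of_dimEnd_le (hΩ.star_mem' A) (hΩ.star_mem' B) h hd

variable (hF : IsFusionSystem ⊤ F)
include hF

lemma dimEnd_le_of_isFIso (hf : IsFIso F f A B) : dimEnd Ω A ≤ dimEnd Ω B := by
  have h := hΩ.hasBoundedChains.dimEnd_le_dimEnd_of_strictMonoOn
    ((hF.strictMonoOn_closure_image hf.1).mono fun C hC => hC.2)
    fun C hC hCA => hΩ.conj_invariant C hC f _ (hF.isFIso_closure_image (hF.restrict hf.1 hCA))
  rwa [hf.closure_image_eq] at h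

lemma dimEnd_eq_of_isFIso (hf : IsFIso F f A B) : dimEnd Ω A = dimEnd Ω B := by
  obtain ⟨g, hg, -⟩ := hF.exists_isFIso_inv hf
  exact le_antisymm (hΩ.dimEnd_le_of_isFIso hF hf) (hΩ.dimEnd_le_of_isFIso hF hg)

lemma dimStar_eq_of_isFIso (hf : IsFIso F f A B) : dimStar Ω star A = dimStar Ω star B := by
  obtain ⟨g, hg, -⟩ := hΩ.extend_star f A B hf
  exact hΩ.dimEnd_eq_of_isFIso hF hg

lemma dimStar_le_of_mapsTo (hf : F f A B) (hAD : Set.MapsTo f A D) :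
    dimStar Ω star A ≤ dimStar Ω star D := by
  rw [hΩ.dimStar_eq_of_isFIso hF (hF.isFIso_closure_image hf)]
  exact hΩ.dimStar_mono ((Subgroup.closure_le D).2 hAD.image_subset)

/-- Both sides lie in `Ω`, the right one is contained in the left one, and they have the same
dimension. -/
lemma closure_image_star (hf : F f P Q) (hP : P ∈ Ω) (hDP : D ≤ P) :
    Subgroup.closure (f '' star D) = star (Subgroup.closure (f '' D)) := by
  have hsD : IsFIso F f (star D) (Subgroup.closure (f '' star D)) :=
    hF.isFIso_closure_image (hF.restrict hf (hΩ.star_le_of_le hDP hP))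
  have hK : Subgroup.closure (f '' star D) ∈ Ω := hΩ.conj_invariant _ (hΩ.star_mem' D) f _ hsD
  refine (hΩ.hasBoundedChains.eq_of_le_of_dimEnd_le (hΩ.star_mem' _) hK
    (hΩ.star_le_of_le (Subgroup.closure_mono (Set.image_mono (hΩ.le_star' D))) hK) ?_).symm
  rw [← hΩ.dimEnd_eq_of_isFIso hF hsD]
  exact (hΩ.dimStar_eq_of_isFIso hF (hF.isFIso_closure_image (hF.restrict hf hDP))).le

/-- The conjugate of `A⋆` by `n` lies in `Ω` and contains `A`, hence contains `A⋆`. -/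
lemma conj_mem_star {n : S} (hn : n ∈ normalizer (A : Set S)) {x : S} (hx : x ∈ star A) :
    n * x * n⁻¹ ∈ star A := by
  set c : S → S := fun y => n⁻¹ * y * n
  have hc : IsFIso F c (star A) (Subgroup.closure (c '' star A)) :=
    hF.isFIso_closure_image (hF.conj_mem n (mem_top n) _ ⊤ le_top le_top fun _ _ => mem_top _)
  have hK := hΩ.conj_invariant _ (hΩ.star_mem' A) c _ hc
  have hAK : A ≤ Subgroup.closure (c '' star A) := fun a ha =>
    Subgroup.subset_closure
      ⟨n * a * n⁻¹, hΩ.le_star' A ((mem_set_normalizer_iff.1 hn a).1 ha), by simp [c, mul_assoc]⟩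
  have hxK := hΩ.star_le_of_le hAK hK hx
  rw [← SetLike.mem_coe, hc.2.symm] at hxK
  obtain ⟨y, hy, rfl⟩ := hxK
  simpa [c, mul_assoc] using hy

lemma normalizer_le_normalizer_star (A : Subgroup S) :
    normalizer (A : Set S) ≤ normalizer (star A : Set S) := fun n hn =>
  mem_set_normalizer_iff.2 fun x =>
    ⟨hΩ.conj_mem_star hF hn, fun hx => by
      simpa [mul_assoc] using hΩ.conj_mem_star hF (inv_mem hn) hx⟩

end IsStratification

section NormalizerInductive

variable {F : HomPred S} {Ω : Set (Subgroup S)} {star : Subgroup S → Subgroup S}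
  (hF : IsFusionSystem ⊤ F) (hΩ : IsStratification ⊤ F Ω star) {V X Y Z : Subgroup S}

lemma NormalizerInductive.exists_hom (h : NormalizerInductive ⊤ F Y) (hX : X ∈ FConj F Y) :
    ∃ φ, F φ (normalizer (X : Set S)) (normalizer (Y : Set S)) ∧ φ '' X = Y := by
  simpa only [inf_top_eq] using h X hX

include hF hΩ

lemma fullyNormalizedIn_of_dimStar_le (hYni : NormalizerInductive ⊤ F Y) (hX : X ∈ FConj F Y)
    (hd : dimStar Ω star (normalizer (Y : Set S)) ≤ dimStar Ω star (normalizer (X : Set S))) :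
    FullyNormalizedIn ⊤ F Ω star X := by
  intro U hU
  obtain ⟨φ, hφ, -⟩ := hYni.exists_hom (hF.mem_fConj_trans hX hU)
  simpa only [inf_top_eq] using
    (hΩ.dimStar_le_of_mapsTo hF hφ (hF.mapsTo _ _ _ hφ)).trans hd

/-- Full normalization of `V` forces the image of `N_S(V)` in `N_S(Z)` to have the same `⋆` as
`N_S(Z)`, so the extension of `N_S(V) → N_S(Z)` to `⋆`s can be inverted and composed with the
embeddings `N_S(U) → N_S(Z)`. -/
lemma normalizerInductive_of_fullyNormalizedIn (hfn : FullyNormalizedIn ⊤ F Ω star V)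
    (hZ : Z ∈ FConj F V) (hZni : NormalizerInductive ⊤ F Z) : NormalizerInductive ⊤ F V := by
  obtain ⟨ψ, hψ, hψV⟩ := hZni.exists_hom (hF.mem_fConj_symm hZ)
  have hM := hF.isFIso_closure_image hψ
  have hstar : star (Subgroup.closure (ψ '' normalizer (V : Set S))) =
      star (normalizer (Z : Set S)) :=
    hΩ.star_eq_of_star_le
      (hΩ.star_le_star ((Subgroup.closure_le _).2 (hF.mapsTo _ _ _ hψ).image_subset))
      (by simpa only [inf_top_eq, hΩ.dimStar_eq_of_isFIso hF hM] using hfn Z hZ)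
  obtain ⟨G, hG, hGψ⟩ := hΩ.extend_star ψ _ _ hM
  rw [hstar] at hG
  obtain ⟨ι, hι, hιG⟩ := hF.exists_isFIso_inv hG
  have hVN : (V : Set S) ⊆ star (normalizer (V : Set S)) := fun v hv =>
    hΩ.le_star' _ (le_normalizer hv)
  have hιZ : ι '' Z = V := by
    rw [← hψV, ← Set.image_congr fun v hv => hGψ (le_normalizer hv), Set.image_image,
      Set.image_congr fun v hv => hιG v (hVN hv), Set.image_id']
  intro U hU
  obtain ⟨φ, hφ, hφU⟩ := hZni.exists_hom (hF.mem_fConj_trans (hF.mem_fConj_symm hZ) hU)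
  have hιφ : F (ι ∘ φ) (normalizer (U : Set S)) (star (normalizer (V : Set S))) :=
    hF.comp_mem _ _ _ _ _ (hF.mono_right hφ (hΩ.le_star' _)) hι.1
  have himg : (ι ∘ φ) '' U = V := by rw [Set.image_comp, hφU, hιZ]
  refine ⟨ι ∘ φ, ?_, himg⟩
  simp only [inf_top_eq]
  refine hF.restrict_mem _ _ _ _ _ hιφ le_rfl (hΩ.le_star' _) fun n hn => ?_
  simpa only [himg, SetLike.mem_coe] using (hF.mulOn hιφ).image_mem_normalizer le_normalizer hn hn

end NormalizerInductive

def MemPreservingFus (F : HomPred S) (V : Subgroup S) : HomPred S := fun f A B =>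
  A ≤ normalizer (V : Set S) ∧ B ≤ normalizer (V : Set S) ∧ F f A B ∧ ∀ a ∈ A, f a ∈ V ↔ a ∈ V

section NormalizerFusion

variable {F : HomPred S} (hF : IsFusionSystem ⊤ F) {V : Subgroup S}
include hF

lemma isFusionSystem_memPreservingFus (V : Subgroup S) :
    IsFusionSystem (normalizer (V : Set S)) (MemPreservingFus F V) where
  le_base _ _ _ h := ⟨h.1, h.2.1⟩
  mapsTo _ _ _ h := hF.mapsTo _ _ _ h.2.2.1
  injOn _ _ _ h := hF.injOn _ _ _ h.2.2.1
  map_mul' _ _ _ h := hF.map_mul' _ _ _ h.2.2.1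
  of_eqOn _ _ _ _ h hgf :=
    ⟨h.1, h.2.1, hF.of_eqOn _ _ _ _ h.2.2.1 hgf, fun a ha => hgf ha ▸ h.2.2.2 a ha⟩
  conj_mem g hg X Y hX hY hXY :=
    ⟨hX, hY, hF.conj_mem g (mem_top g) X Y le_top le_top hXY,
      fun a _ => ((mem_set_normalizer_iff''.1 hg) a).symm⟩
  comp_mem _ _ _ _ _ hf hg :=
    ⟨hf.1, hg.2.1, hF.comp_mem _ _ _ _ _ hf.2.2.1 hg.2.2.1,
      fun a ha => (hg.2.2.2 _ (hF.mapsTo _ _ _ hf.2.2.1 ha)).trans (hf.2.2.2 a ha)⟩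
  restrict_mem _ _ _ _ _ hf hX₀ hY₀ hmaps :=
    ⟨hX₀.trans hf.1, hY₀.trans hf.2.1, hF.restrict_mem _ _ _ _ _ hf.2.2.1 hX₀ hY₀ hmaps,
      fun a ha => hf.2.2.2 a (hX₀ ha)⟩
  corestrict_mem _ _ _ hf :=
    ⟨hf.1, ((Subgroup.closure_le _).2 (hF.mapsTo _ _ _ hf.2.2.1).image_subset).trans hf.2.1,
      hF.corestrict_mem _ _ _ hf.2.2.1, hf.2.2.2⟩
  inv_mem f X Y hf := by
    obtain ⟨g, hg, hgf⟩ := hF.inv_mem f X Y hf.2.2.1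
    refine ⟨g, ⟨((Subgroup.closure_le _).2 (hF.mapsTo _ _ _ hf.2.2.1).image_subset).trans
      hf.2.1, hf.1, hg, fun y hy => ?_⟩, hgf⟩
    rw [← SetLike.mem_coe, hF.coe_closure_image hf.2.2.1] at hy
    obtain ⟨x, hx, rfl⟩ := hy
    rw [hgf x hx]
    exact (hf.2.2.2 x hx).symm

lemma NPhi.memPreservingFus {f : S → S} {A B : Subgroup S} (h : NPhi F V f A B) :
    MemPreservingFus F V f A B := by
  obtain ⟨hA, hB, hf, G, hG, hGf, hGV⟩ := h
  refine ⟨hA, hB, hf.1, fun a ha => ?_⟩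
  rw [← hGf ha]
  constructor
  · intro hGa
    rw [← SetLike.mem_coe, ← hGV] at hGa
    obtain ⟨v, hv, hGva⟩ := hGa
    rwa [← hF.injOn _ _ _ hG.1 (mem_sup_right hv) (mem_sup_left ha) hGva]
  · intro hv
    rw [← SetLike.mem_coe, ← hGV]
    exact Set.mem_image_of_mem G hv

lemma NFus.memPreservingFus {f : S → S} {A B : Subgroup S} (h : NFus F V f A B) :
    MemPreservingFus F V f A B :=
  h _ (isFusionSystem_memPreservingFus hF V) (fun _ _ _ h => h.2.2.1)
    fun _ _ _ h => NPhi.memPreservingFus hF h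

lemma fConj_nFus_subset (A : Subgroup S) : FConj (NFus F V) A ⊆ FConj F A :=
  fun _ ⟨f, hf, hfA⟩ => ⟨f, (NFus.memPreservingFus hF hf).2.2.1, hfA⟩

lemma star_eq_of_mem_fConj_nFus {Ω : Set (Subgroup S)} {star : Subgroup S → Subgroup S}
    (hΩ : IsStratification ⊤ F Ω star) {A B : Subgroup S}
    (hB : B ∈ FConj (NFus F (star A)) A) : star B = star A := by
  obtain ⟨f, hf, hfA⟩ := hB
  have hBA : B ≤ star A := by
    intro b hb
    rw [← SetLike.mem_coe, ← hfA] at hb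
    obtain ⟨a, ha, rfl⟩ := hb
    exact ((NFus.memPreservingFus hF hf).2.2.2 a ha).2 (hΩ.le_star' A ha)
  exact hΩ.star_eq_of_star_le (hΩ.star_star A ▸ hΩ.star_le_star hBA)
    (hΩ.dimStar_eq_of_isFIso hF ⟨(NFus.memPreservingFus hF hf).2.2.1, hfA⟩).le

end NormalizerFusion

namespace IsStratification

variable {F : HomPred S} {Ω : Set (Subgroup S)} {star : Subgroup S → Subgroup S}
  (hΩ : IsStratification ⊤ F Ω star) {V A B C P Q : Subgroup S}
include hΩ

lemma bulletStar_of_le_star (hV : V ≤ star A) :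
    bulletStar star V A = star A ⊓ normalizer (V : Set S) := by
  simp only [bulletStar, hΩ.star_sup_eq hV]

lemma star_inf_normalizer_mem_bulletOmega (hA : A ≤ normalizer (V : Set S)) (hV : V ≤ star A) :
    star A ⊓ normalizer (V : Set S) ∈ bulletOmega star V :=
  ⟨A, hA, (hΩ.bulletStar_of_le_star hV).symm⟩

lemma mem_bulletOmega_iff : B ∈ bulletOmega star V ↔
    B ≤ normalizer (V : Set S) ∧ star (V ⊔ B) ⊓ normalizer (V : Set S) = B := by
  refine ⟨?_, fun h => ⟨B, h.1, h.2.symm⟩⟩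
  rintro ⟨A, hA, rfl⟩
  refine ⟨inf_le_right, congrArg (· ⊓ _) (le_antisymm ?_ ?_)⟩
  · exact hΩ.star_le_of_le (sup_le (le_sup_left.trans (hΩ.le_star' _)) inf_le_left)
      (hΩ.star_mem' _)
  · exact hΩ.star_le_star (sup_le_sup_left (le_inf (le_sup_right.trans (hΩ.le_star' _)) hA) V)

lemma strictMonoOn_star_sup : StrictMonoOn (fun B => star (V ⊔ B)) (bulletOmega star V) := by
  intro B₁ h₁ B₂ h₂ h
  refine (hΩ.star_le_star (sup_le_sup_left h.le V)).lt_of_ne fun he => h.ne ?_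
  calc B₁ = star (V ⊔ B₁) ⊓ normalizer (V : Set S) := ((hΩ.mem_bulletOmega_iff).1 h₁).2.symm
    _ = star (V ⊔ B₂) ⊓ normalizer (V : Set S) := congrArg (· ⊓ _) he
    _ = B₂ := ((hΩ.mem_bulletOmega_iff).1 h₂).2

lemma hasBoundedChains_bulletOmega : HasBoundedChains (bulletOmega star V) :=
  hΩ.hasBoundedChains.of_strictMonoOn hΩ.strictMonoOn_star_sup fun _ _ => hΩ.star_mem' _

variable (hF : IsFusionSystem ⊤ F) {f : S → S}
include hF

lemma closure_image_mem_bulletOmega (hf : IsFIso F f P Q) (hP : P ∈ Ω) (hVP : V ≤ P)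
    (hfV : f '' V = V) (hB : B ∈ bulletOmega star V) (hBP : B ≤ P) :
    Subgroup.closure (f '' B) ∈ bulletOmega star V := by
  obtain ⟨-, hB⟩ := hΩ.mem_bulletOmega_iff.1 hB
  have hVB : V ⊔ B ≤ P := sup_le hVP hBP
  have hsup : Subgroup.closure (f '' (V ⊔ B : Subgroup S)) = V ⊔ Subgroup.closure (f '' B) := by
    rw [(hF.mulOn hf.1).closure_image_sup hVP hBP, hfV, closure_eq]
  have key : Subgroup.closure (f '' B) =
      star (V ⊔ Subgroup.closure (f '' B)) ⊓ normalizer (V : Set S) := by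
    conv_lhs => rw [← hB]
    rw [hF.closure_image_inf_normalizer hf hVP hfV (hΩ.star_le_of_le hVB hP),
      hΩ.closure_image_star hF hf.1 hP hVB, hsup]
  exact hΩ.mem_bulletOmega_iff.2 ⟨by rw [key]; exact inf_le_right, key.symm⟩

lemma dimEnd_bulletOmega_le_of_isFIso (hf : IsFIso F f P Q) (hP : P ∈ Ω) (hVP : V ≤ P)
    (hfV : f '' V = V) :
    dimEnd (bulletOmega star V) (P ⊓ normalizer (V : Set S)) ≤
      dimEnd (bulletOmega star V) (Q ⊓ normalizer (V : Set S)) := by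
  have h := hΩ.hasBoundedChains_bulletOmega.dimEnd_le_dimEnd_of_strictMonoOn
    (A := P ⊓ normalizer (V : Set S))
    ((hF.strictMonoOn_closure_image hf.1).mono fun C hC => hC.2.trans inf_le_left)
    fun C hC hCP => hΩ.closure_image_mem_bulletOmega hF hf hP hVP hfV hC (hCP.trans inf_le_left)
  rwa [hF.closure_image_inf_normalizer hf hVP hfV le_rfl, hf.closure_image_eq] at h

end IsStratification

section MainResults

variable {F : HomPred S} {Ω : Set (Subgroup S)} {star : Subgroup S → Subgroup S}
  (hF : IsFusionSystem ⊤ F) (hΩ : IsStratification ⊤ F Ω star) {A X Y : Subgroup S}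
include hF hΩ

lemma exists_mem_fConj_nFus_fullyNormalizedIn (hVni : NormalizerInductive ⊤ F (star X))
    (hY : Y ∈ FConj F X) (hYni : NormalizerInductive ⊤ F Y) :
    ∃ X' ∈ FConj (NFus F (star X)) X, FullyNormalizedIn ⊤ F Ω star X' := by
  obtain ⟨θ, hθ⟩ := hY
  obtain ⟨g, hg, hgθ⟩ := hΩ.extend_star θ X Y hθ
  obtain ⟨γ, hγ, hγY⟩ := hVni.exists_hom ⟨g, hg⟩
  have hYN : Y ≤ normalizer (star Y : Set S) := (hΩ.le_star' Y).trans le_normalizer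
  have hγY' := hF.isFIso_closure_image (hF.restrict hγ hYN)
  set X' := Subgroup.closure (γ '' Y)
  have hX'V : X' ≤ star X :=
    (Subgroup.closure_le _).2 (hγY ▸ Set.image_mono (SetLike.coe_subset_coe.2 (hΩ.le_star' Y)))
  have hαX : (γ ∘ g) '' X = X' := by rw [Set.image_comp, Set.image_congr hgθ, hθ.2, hγY'.2]
  have hαV : (γ ∘ g) '' star X = star X := by rw [Set.image_comp, hg.2, hγY]
  have hα : F (γ ∘ g) (star X) (star X) :=
    hF.restrict_mem _ _ _ _ _ (hF.comp_mem _ _ _ _ _ (hF.mono_right hg.1 le_normalizer) hγ)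
      le_rfl le_normalizer (Set.mapsTo_iff_image_subset.2 hαV.subset)
  have hNPhi : NPhi F (star X) (γ ∘ g) X X' := by
    refine ⟨(hΩ.le_star' X).trans le_normalizer, hX'V.trans le_normalizer,
      ⟨hF.restrict_mem _ _ _ _ _ hα (hΩ.le_star' X) hX'V
        (Set.mapsTo_iff_image_subset.2 hαX.subset), hαX⟩,
      γ ∘ g, ?_, fun _ _ => rfl, hαV⟩
    rw [sup_eq_right.2 (hΩ.le_star' X), sup_eq_right.2 hX'V]
    exact ⟨hα, hαV⟩
  refine ⟨X', ⟨γ ∘ g, fun _ _ _ hΦ => hΦ _ _ _ hNPhi, hαX⟩,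
    fullyNormalizedIn_of_dimStar_le hF hΩ hYni ⟨γ, hγY'⟩ ?_⟩
  have hNY := hΩ.normalizer_le_normalizer_star hF Y
  refine hΩ.dimStar_le_of_mapsTo hF (hF.restrict hγ hNY) fun n hn => ?_
  simpa only [← hγY'.2, SetLike.mem_coe] using (hF.mulOn hγ).image_mem_normalizer hYN (hNY hn) hn

/-- Every `U ∈ A^{N_F(A⋆)}` has `U⋆ = A⋆`, so the extension to `⋆`s of an embedding
`N_S(U) → N_S(A)` mapping `U` onto `A` fixes `A⋆`, and carries chains of `N_Ω(A⋆)` below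
`N_S(U)•` to chains below `N_S(A)•`. -/
lemma fullyNormalizedIn_nFus (hni : NormalizerInductive ⊤ F A) :
    FullyNormalizedIn (normalizer (star A : Set S)) (NFus F (star A))
      (bulletOmega star (star A)) (bulletStar star (star A)) A := by
  intro U hU
  have hUA := star_eq_of_mem_fConj_nFus hF hΩ hU
  have hNU : normalizer (U : Set S) ≤ normalizer (star A : Set S) :=
    hUA ▸ hΩ.normalizer_le_normalizer_star hF U
  have hNA := hΩ.normalizer_le_normalizer_star hF A
  have hVU : star A ≤ star (normalizer (U : Set S)) := hUA ▸ hΩ.star_le_star le_normalizer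
  have hVA : star A ≤ star (normalizer (A : Set S)) := hΩ.star_le_star le_normalizer
  obtain ⟨χ, hχ, hχU⟩ := hni.exists_hom (fConj_nFus_subset hF A hU)
  obtain ⟨Θ, hΘ, hΘχ⟩ := hΩ.extend_star χ _ _ (hF.isFIso_closure_image hχ)
  have hΘV : Θ '' star A = star A := by
    have h := hΩ.closure_image_star hF hΘ.1 (hΩ.star_mem' _) (le_normalizer.trans (hΩ.le_star' _))
    rw [Set.image_congr fun u hu => hΘχ (le_normalizer hu), hχU, closure_eq, hUA] at h
    rw [← hF.coe_closure_image (hF.restrict hΘ.1 hVU), h]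
  have hMA : Subgroup.closure (χ '' normalizer (U : Set S)) ≤ normalizer (A : Set S) :=
    (Subgroup.closure_le _).2 (hF.mapsTo _ _ _ hχ).image_subset
  have hVM : star A ≤ star (Subgroup.closure (χ '' normalizer (U : Set S))) := by
    rw [← SetLike.coe_subset_coe, ← hΘ.2, ← hΘV]
    exact Set.image_mono (SetLike.coe_subset_coe.2 hVU)
  rw [dimStar, dimStar, inf_eq_left.2 hNU, inf_eq_left.2 hNA, hΩ.bulletStar_of_le_star hVU,
    hΩ.bulletStar_of_le_star hVA]
  calc _ ≤ _ := hΩ.dimEnd_bulletOmega_le_of_isFIso hF hΘ (hΩ.star_mem' _) hVU hΘV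
    _ ≤ _ := hΩ.hasBoundedChains_bulletOmega.dimEnd_mono
      (hΩ.star_inf_normalizer_mem_bulletOmega (hMA.trans hNA) hVM)
      (hΩ.star_inf_normalizer_mem_bulletOmega hNA hVA) (inf_le_inf_right _ (hΩ.star_le_star hMA))

end MainResults

/-- Lemma 2.11. If `X ∈ Γ` and `X⋆` is fully normalized in `F`, then
there is an `N_F(X⋆)`-conjugate `X′` of `X` which is fully normalized in `F`; moreover,
for any such `X′` one has `X⋆ = (X′)⋆`, and `X′` is fully normalized in `N_F(X⋆)`. -/
theorem exists_fullyNormalized_NF_conjugate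
    {S : Type*} [Group S] (F : HomPred S)
    (Ω : Set (Subgroup S)) (star : Subgroup S → Subgroup S)
    (hF : IsFusionSystem ⊤ F) (hΩ : IsStratification ⊤ F Ω star)
    (Γ : Set (Subgroup S)) (hΓ : FClosed F Γ) (hind : GammaInductive ⊤ F Γ)
    (X : Subgroup S) (hX : X ∈ Γ)
    (hfn : FullyNormalizedIn ⊤ F Ω star (star X)) :
    (∃ X' ∈ FConj (NFus F (star X)) X, FullyNormalizedIn ⊤ F Ω star X') ∧
    ∀ X' ∈ FConj (NFus F (star X)) X, FullyNormalizedIn ⊤ F Ω star X' →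
      star X = star X' ∧
      FullyNormalizedIn (Subgroup.normalizer ((star X : Subgroup S) : Set S)) (NFus F (star X))
        (bulletOmega star (star X)) (bulletStar star (star X)) X' := by
  obtain ⟨-, hΓconj, hΓup⟩ := hΓ
  have hVni : NormalizerInductive ⊤ F (star X) := by
    obtain ⟨Z, hZ, hZni⟩ := hind _ (hΓup X hX _ (hΩ.le_star' X))
    exact normalizerInductive_of_fullyNormalizedIn hF hΩ hfn hZ hZni
  obtain ⟨Y, hY, hYni⟩ := hind X hX
  refine ⟨exists_mem_fConj_nFus_fullyNormalizedIn hF hΩ hVni hY hYni, fun X' hX' hX'fn => ?_⟩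
  have hX'star : star X' = star X := star_eq_of_mem_fConj_nFus hF hΩ hX'
  obtain ⟨Z, hZ, hZni⟩ := hind X' (hΓconj X hX X' (fConj_nFus_subset hF X hX'))
  refine ⟨hX'star.symm, ?_⟩
  rw [← hX'star]
  exact fullyNormalizedIn_nFus hF hΩ (normalizerInductive_of_fullyNormalizedIn hF hΩ hX'fn hZ hZni)
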